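/- arXiv:2312.13712 — 2 statements merged into one kernel-verified Lean document; each statement's English description precedes it below -/
import Mathlib

section
/- Let X be a type, and model a dataset as a multiset of records from X; two datasets are neighbors if one is obtained from the other by replacing at most one record (i.e., D₂ = (D₁ − {a}) + {b} for some a ∈ D₁ and b ∈ X, or D₂ = D₁). Let κ₁ be a mechanism assigning to each dataset a probability measure on a measurable space Ω₁ that satisfies ε₁-differential privacy, and let κ₂ be a mechanism into probability measures on Ω₂ that satisfies ε₂-differential privacy. Then for every measurable function g : Ω₁ × Ω₂ → Ω₃, the mechanism D ↦ (κ₁(D) ⊗ κ₂(D)).map g (the pushforward under g of the product measure of κ₁(D) and κ₂(D)) satisfies (ε₁ + ε₂)-differential privacy. -/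
open MeasureTheory Real

/-- Two datasets (multisets of records) are neighbors if one is obtained from the
other by replacing at most one record. -/
def Neighbor {X : Type*} [DecidableEq X] (D₁ D₂ : Multiset X) : Prop :=
  D₂ = D₁ ∨ ∃ a ∈ D₁, ∃ b : X, D₂ = D₁.erase a + {b}

/-- A mechanism `κ` satisfies `ε`-differential privacy. -/
def DP {X Ω : Type*} [DecidableEq X] [MeasurableSpace Ω] (ε : ℝ)
    (κ : Multiset X → ProbabilityMeasure Ω) : Prop :=
  ∀ D₁ D₂ : Multiset X, Neighbor D₁ D₂ → ∀ S : Set Ω, MeasurableSet S →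
    (κ D₁).toMeasure S ≤ ENNReal.ofReal (Real.exp ε) * (κ D₂).toMeasure S

/-! Replacing a record costs a factor `exp ε₁` in the first marginal and `exp ε₂` in the second;
since these are inequalities between whole measures, they multiply under products and survive
pushforward along `g`. -/

theorem DP.toMeasure_le_smul {X Ω : Type*} [DecidableEq X] [MeasurableSpace Ω] {ε : ℝ}
    {κ : Multiset X → ProbabilityMeasure Ω} (h : DP ε κ) {D₁ D₂ : Multiset X}
    (hN : Neighbor D₁ D₂) :
    (κ D₁).toMeasure ≤ ENNReal.ofReal (Real.exp ε) • (κ D₂).toMeasure :=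
  Measure.le_iff.2 (h D₁ D₂ hN)

theorem MeasureTheory.Measure.prod_le_smul_prod {α β : Type*} [MeasurableSpace α]
    [MeasurableSpace β] {μ₁ ν₁ : Measure α} {μ₂ ν₂ : Measure β} [SFinite ν₂] {a b : ENNReal}
    (h₁ : μ₁ ≤ a • ν₁) (h₂ : μ₂ ≤ b • ν₂) :
    μ₁.prod μ₂ ≤ (a * b) • ν₁.prod ν₂ :=
  calc μ₁.prod μ₂ ≤ (a • ν₁).prod (b • ν₂) := Measure.prod_mono h₁ h₂
    _ = (a * b) • ν₁.prod ν₂ := by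
      rw [Measure.prod_smul_left, Measure.prod_smul_right, smul_smul]

/-- Sequential composition: combining an `ε₁`-DP mechanism and an `ε₂`-DP mechanism
through any measurable function `g` yields an `(ε₁ + ε₂)`-DP mechanism. -/
theorem sequential_composition {X Ω₁ Ω₂ Ω₃ : Type*} [DecidableEq X]
    [MeasurableSpace Ω₁] [MeasurableSpace Ω₂] [MeasurableSpace Ω₃]
    (ε₁ ε₂ : ℝ)
    (κ₁ : Multiset X → ProbabilityMeasure Ω₁)
    (κ₂ : Multiset X → ProbabilityMeasure Ω₂)
    (h₁ : DP ε₁ κ₁) (h₂ : DP ε₂ κ₂)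
    (g : Ω₁ × Ω₂ → Ω₃) (hg : Measurable g) :
    ∀ D₁ D₂ : Multiset X, Neighbor D₁ D₂ → ∀ S : Set Ω₃, MeasurableSet S →
      (((κ₁ D₁).toMeasure.prod (κ₂ D₁).toMeasure).map g) S ≤
        ENNReal.ofReal (Real.exp (ε₁ + ε₂)) *
          (((κ₁ D₂).toMeasure.prod (κ₂ D₂).toMeasure).map g) S := by
  intro D₁ D₂ hN S _
  have hprod := Measure.prod_le_smul_prod (h₁.toMeasure_le_smul hN) (h₂.toMeasure_le_smul hN)
  have hmap := Measure.le_iff'.1 (Measure.map_mono hprod hg) S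
  rwa [Measure.map_smul, Measure.smul_apply, smul_eq_mul, ← ENNReal.ofReal_mul (Real.exp_nonneg _),
    ← Real.exp_add] at hmap
end

section
/- Let mA ≤ MA be real numbers and let C be a nonempty multiset of real numbers all of whose elements lie in the interval [mA, MA]. Define the centroid c(M) of a nonempty multiset M of reals as (Σ M)/|M|. Then the set { |c((C − {a}) + {v}) − c(C)| : a ∈ C, v ∈ [mA, MA] } of centroid changes over all single-record replacements within the domain [mA, MA] has greatest element max(MA − min C, max C − mA) / |C|; that is, this value is both attained by some replacement and an upper bound for all replacements. -/
/-- The centroid (arithmetic mean) of a multiset of reals. -/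
noncomputable def centroid (M : Multiset ℝ) : ℝ := M.sum / M.card

/-- The `i`-th smallest element of a multiset of reals (0-indexed). -/
noncomputable def nthSmallest (M : Multiset ℝ) (i : ℕ) : ℝ :=
  (M.sort (· ≤ ·)).getD i 0

/-!
Replacing a record `a` by `v` moves the centroid by exactly `(v - a) / |C|`, so the question is
how large `|v - a|` can be for `a ∈ C` and `v ∈ [mA, MA]`. Since `min C ≤ a ≤ max C`, this is at
most `max (MA - min C, max C - mA)`, and the bound is attained by replacing `min C` with `MA` or
`max C` with `mA`.
-/

lemma centroid_erase_add_singleton_sub {C : Multiset ℝ} {a : ℝ} (ha : a ∈ C) (v : ℝ) :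
    centroid (C.erase a + {v}) - centroid C = (v - a) / C.card := by
  have hsum : (C.erase a).sum = C.sum - a := by
    rw [← Multiset.cons_erase ha, Multiset.sum_cons, Multiset.erase_cons_head]
    ring
  have hcard : (C.erase a + {v}).card = C.card := by
    rw [Multiset.card_add, Multiset.card_singleton, Multiset.card_erase_add_one ha]
  rw [centroid, centroid, hcard, Multiset.sum_add, hsum, Multiset.sum_singleton, ← sub_div]
  ring_nf

section nthSmallest

variable {C : Multiset ℝ}

lemma nthSmallest_eq_getElem {i : ℕ} (hi : i < C.card) :
    nthSmallest C i = (C.sort (· ≤ ·))[i]'(by rwa [Multiset.length_sort]) :=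
  List.getD_eq_getElem _ _ _

lemma nthSmallest_mem {i : ℕ} (hi : i < C.card) : nthSmallest C i ∈ C := by
  rw [nthSmallest_eq_getElem hi, ← Multiset.mem_sort (· ≤ ·)]
  exact List.getElem_mem _

lemma nthSmallest_le_nthSmallest {i j : ℕ} (hij : i ≤ j) (hj : j < C.card) :
    nthSmallest C i ≤ nthSmallest C j := by
  rw [nthSmallest_eq_getElem (hij.trans_lt hj), nthSmallest_eq_getElem hj]
  exact (Multiset.pairwise_sort C _).sortedLE.getElem_le_getElem_of_le hij

lemma exists_nthSmallest_eq {x : ℝ} (hx : x ∈ C) : ∃ j < C.card, nthSmallest C j = x := by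
  rw [← Multiset.mem_sort (· ≤ ·)] at hx
  obtain ⟨j, hj, rfl⟩ := List.getElem_of_mem hx
  rw [Multiset.length_sort] at hj
  exact ⟨j, hj, nthSmallest_eq_getElem hj⟩

lemma nthSmallest_zero_le {x : ℝ} (hx : x ∈ C) : nthSmallest C 0 ≤ x := by
  obtain ⟨j, hj, rfl⟩ := exists_nthSmallest_eq hx
  exact nthSmallest_le_nthSmallest j.zero_le hj

lemma le_nthSmallest_card_sub_one {x : ℝ} (hx : x ∈ C) : x ≤ nthSmallest C (C.card - 1) := by
  obtain ⟨j, hj, rfl⟩ := exists_nthSmallest_eq hx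
  exact nthSmallest_le_nthSmallest (by omega) (by omega)

end nthSmallest

lemma abs_sub_le_max_of_mem_Icc {m M mA MA a v : ℝ} (ha : a ∈ Set.Icc m M)
    (hv : v ∈ Set.Icc mA MA) : |v - a| ≤ max (MA - m) (M - mA) := by
  obtain ⟨ham, haM⟩ := ha
  obtain ⟨hvm, hvM⟩ := hv
  rw [abs_sub_le_iff]
  constructor
  · exact le_max_of_le_left (by linarith)
  · exact le_max_of_le_right (by linarith)

theorem centroid_local_sensitivity_general (mA MA : ℝ)
    (C : Multiset ℝ) (hC : C ≠ 0) (hmem : ∀ x ∈ C, x ∈ Set.Icc mA MA) :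
    IsGreatest
      { d : ℝ | ∃ a ∈ C, ∃ v ∈ Set.Icc mA MA,
          d = |centroid (C.erase a + {v}) - centroid C| }
      (max (MA - nthSmallest C 0) (nthSmallest C (C.card - 1) - mA) / (C.card : ℝ)) := by
  have hcard : 0 < C.card := Multiset.card_pos.2 hC
  set m := nthSmallest C 0
  set M := nthSmallest C (C.card - 1)
  have hm : m ∈ C := nthSmallest_mem hcard
  have hM : M ∈ C := nthSmallest_mem (by omega)
  obtain ⟨hmA_m, hm_MA⟩ := hmem m hm
  obtain ⟨hmA_M, hM_MA⟩ := hmem M hM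
  have habs (a : ℝ) (ha : a ∈ C) (v : ℝ) :
      |centroid (C.erase a + {v}) - centroid C| = |v - a| / C.card := by
    rw [centroid_erase_add_singleton_sub ha, abs_div, Nat.abs_cast]
  constructor
  · rcases le_total (M - mA) (MA - m) with h | h
    · refine ⟨m, hm, MA, ⟨hmA_m.trans hm_MA, le_rfl⟩, ?_⟩
      rw [habs m hm, max_eq_left h, abs_of_nonneg (sub_nonneg.2 hm_MA)]
    · refine ⟨M, hM, mA, ⟨le_rfl, hmA_M.trans hM_MA⟩, ?_⟩
      rw [habs M hM, max_eq_right h, abs_sub_comm, abs_of_nonneg (sub_nonneg.2 hmA_M)]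
  · rintro d ⟨a, ha, v, hv, rfl⟩
    rw [habs a ha]
    gcongr
    exact abs_sub_le_max_of_mem_Icc ⟨nthSmallest_zero_le ha, le_nthSmallest_card_sub_one ha⟩ hv

/-- Local sensitivity of the mean centroid of a cluster `C` with values in the
domain `[mA, MA]`: the set of centroid changes over all single-record
replacements within the domain has greatest element
`max (MA − min C, max C − mA) / |C|`. -/
theorem centroid_local_sensitivity (mA MA : ℝ) (hdom : mA ≤ MA)
    (C : Multiset ℝ) (hC : C ≠ 0) (hmem : ∀ x ∈ C, x ∈ Set.Icc mA MA) :
    IsGreatest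
      { d : ℝ | ∃ a ∈ C, ∃ v ∈ Set.Icc mA MA,
          d = |centroid (C.erase a + {v}) - centroid C| }
      (max (MA - nthSmallest C 0) (nthSmallest C (C.card - 1) - mA) / (C.card : ℝ)) :=
  centroid_local_sensitivity_general mA MA C hC hmem
end
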